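/- Let m, c, d be positive integers, v > 0, and set q = e^{2πiτ} with τ = u + iv in the upper half-plane. Then for r > 0 sufficiently small (so that |e^s ζ_c^d q| < 1 on |s| = r), the series A⁺_m(c,d;τ) := ∑_{n≥1} n^{(k-1)/2} I_{1-k}(4π√(mn)/c) ζ_c^{nd} q^n converges absolutely and equals (1/(2πi)) ζ_c^d q ∮_{|s|=r} α⁺_{m,c}(s) e^s / (1 - e^s ζ_c^d q) ds, where α⁺_{m,c}(s) := ∑_{j≥0} (2π√m/c)^{2j+1-k} / ((j+1-k)! s^{j+1}) and ζ_c = e^{2πi/c}. -/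

import Mathlib

noncomputable def besselI (α : ℕ) (x : ℂ) : ℂ :=
  ∑' j : ℕ, (1 / ((Nat.factorial j : ℂ) * (Nat.factorial (j + α) : ℂ))) *
    (x / 2) ^ (2 * j + α)

/-!
Write `K = 1 - k` and `x = 2π√m / c`, so that `α⁺(s) = ∑ⱼ aⱼ / s^(j+1)` with
`aⱼ = x^(2j+K) / (j+K)!`. Expanding the Bessel function, `n^(-K/2) I_K(2x√n) = ∑ⱼ aⱼ nʲ / j!`,
and by Cauchy's formula for derivatives `∮ e^(ns) / s^(j+1) ds = 2πi nʲ / j!`; hence the `n`-th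
term of `A⁺` is `(2πi)⁻¹ (ζ^d q)ⁿ ∮ α⁺(s) e^(ns) ds`. On `|s| = r` the geometric series
`∑ₙ (e^s ζ^d q)ⁿ` is dominated by `(e^r |ζ^d q|)ⁿ`, which justifies exchanging it with the
contour integral and at the same time bounds the terms of `A⁺` absolutely.
-/

open Complex Metric Real
open scoped Nat

theorem hasSum_circleIntegral_of_norm_le {E ι : Type*} [NormedAddCommGroup E]
    [NormedSpace ℂ E] [Countable ι] {f : ι → ℂ → E} {g : ℂ → E} {c : ℂ} {R : ℝ} {u : ι → ℝ}
    (hR : 0 ≤ R) (hf : ∀ i, ContinuousOn (f i) (sphere c R)) (hu : Summable u)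
    (hfu : ∀ i, ∀ z ∈ sphere c R, ‖f i z‖ ≤ u i)
    (hfg : ∀ z ∈ sphere c R, HasSum (fun i => f i z) (g z)) :
    HasSum (fun i => ∮ z in C(c, R), f i z) (∮ z in C(c, R), g z) := by
  refine intervalIntegral.hasSum_integral_of_dominated_convergence (fun i _ => R * u i)
    (fun i => ((hf i).circleIntegrable hR).out.def'.1) (fun i => ?_)
    (.of_forall fun _ _ => hu.mul_left R) intervalIntegrable_const
    (.of_forall fun θ _ => (hfg _ (circleMap_mem_sphere c hR θ)).const_smul _)
  refine .of_forall fun θ _ => ?_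
  rw [norm_smul, deriv_circleMap, norm_mul, norm_circleMap_zero, norm_I, mul_one,
    abs_of_nonneg hR]
  exact mul_le_mul_of_nonneg_left (hfu i _ (circleMap_mem_sphere c hR θ)) hR

theorem circleIntegral_exp_mul_div_pow {r : ℝ} (hr : 0 < r) (μ : ℂ) (j : ℕ) :
    (∮ s in C(0, r), exp (μ * s) / s ^ (j + 1)) = 2 * π * I * μ ^ j / j ! := by
  have hd : DifferentiableOn ℂ (fun s => exp (μ * s)) (closedBall 0 r) := by fun_prop
  have := hd.circleIntegral_one_div_sub_center_pow_smul hr j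
  simp only [sub_zero, smul_eq_mul, iteratedDeriv_cexp_const_mul, mul_zero, Complex.exp_zero,
    mul_one] at this
  rw [← div_mul_eq_mul_div, ← this]
  congr 1 with s
  ring

theorem summable_norm_pow_div_factorial_add_div_pow (x : ℂ) (K : ℕ) {r : ℝ} (hr : 0 < r) :
    Summable fun j : ℕ => ‖x ^ (2 * j + K) / (j + K)!‖ / r ^ (j + 1) := by
  refine Summable.of_nonneg_of_le (fun j => by positivity) (fun j => ?_)
    ((Real.summable_pow_div_factorial (‖x‖ ^ 2 / r)).mul_left (‖x‖ ^ K / r))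
  have hfac : (j ! : ℝ) ≤ (j + K)! := by exact_mod_cast Nat.factorial_le (Nat.le_add_right j K)
  rw [norm_div, norm_pow, Complex.norm_natCast]
  calc ‖x‖ ^ (2 * j + K) / (j + K)! / r ^ (j + 1)
      ≤ ‖x‖ ^ (2 * j + K) / j ! / r ^ (j + 1) := by gcongr
    _ = ‖x‖ ^ K / r * ((‖x‖ ^ 2 / r) ^ j / j !) := by
      rw [pow_add, pow_mul, pow_succ, div_pow]; field_simp; ring

theorem cpow_neg_half_mul_besselI (K : ℕ) (y : ℝ) {N : ℝ} (hN : 0 < N) :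
    (N : ℂ) ^ (-(K : ℂ) / 2) * besselI K ((2 * y * √N : ℝ) : ℂ) =
      ∑' j : ℕ, ((y ^ (2 * j + K) / (j + K)! : ℝ) : ℂ) * (N : ℂ) ^ j / j ! := by
  have hSK : (N : ℂ) ^ (-(K : ℂ) / 2) * ((√N : ℝ) : ℂ) ^ K = 1 := by
    rw [Real.sqrt_eq_rpow, ofReal_cpow hN.le, ← cpow_nat_mul,
      ← cpow_add _ _ (by exact_mod_cast hN.ne'),
      show -(K : ℂ) / 2 + K * ((1 / 2 : ℝ) : ℂ) = 0 by push_cast; ring, cpow_zero]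
  set S : ℂ := ((√N : ℝ) : ℂ)
  have hS2 : S ^ 2 = N := by rw [← ofReal_pow, Real.sq_sqrt hN.le]
  rw [besselI, ← tsum_mul_left]
  congr 1 with j
  calc (N : ℂ) ^ (-(K : ℂ) / 2) *
        (1 / ((j ! : ℂ) * (j + K)!) * ((2 * y * √N : ℝ) / 2) ^ (2 * j + K))
      = ((N : ℂ) ^ (-(K : ℂ) / 2) * S ^ K) *
          (y ^ (2 * j + K) * (S ^ 2) ^ j / ((j ! : ℂ) * (j + K)!)) := by
        push_cast; ring
    _ = _ := by rw [hSK, hS2]; push_cast; ring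

section LaurentTail

variable {a : ℕ → ℂ} {r : ℝ}

theorem norm_div_pow_of_mem_sphere {𝕜 : Type*} [NormedDivisionRing 𝕜] (b : 𝕜) {s : 𝕜}
    (hs : s ∈ sphere (0 : 𝕜) r) (n : ℕ) : ‖b / s ^ n‖ = ‖b‖ / r ^ n := by
  rw [norm_div, norm_pow, mem_sphere_zero_iff_norm.mp hs]

theorem continuousOn_tsum_div_pow_succ (hr : 0 < r)
    (ha : Summable fun j => ‖a j‖ / r ^ (j + 1)) :
    ContinuousOn (fun s => ∑' j, a j / s ^ (j + 1)) (sphere 0 r) :=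
  continuousOn_tsum
    (fun _ => continuousOn_const.div (continuousOn_pow _) fun _ hs =>
      pow_ne_zero _ (ne_of_mem_sphere hs hr.ne'))
    ha fun _ _ hs => (norm_div_pow_of_mem_sphere _ hs _).le

theorem circleIntegral_tsum_div_pow_succ_mul_exp (hr : 0 < r)
    (ha : Summable fun j => ‖a j‖ / r ^ (j + 1)) (μ : ℂ) :
    (∮ s in C(0, r), (∑' j, a j / s ^ (j + 1)) * exp (μ * s)) =
      2 * π * I * ∑' j, a j * μ ^ j / j ! := by
  have hterm (j : ℕ) : (∮ s in C(0, r), a j / s ^ (j + 1) * exp (μ * s)) =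
      2 * π * I * (a j * μ ^ j / j !) := by
    simp_rw [div_mul_eq_mul_div, mul_div_assoc, circleIntegral.integral_const_mul,
      circleIntegral_exp_mul_div_pow hr]
    ring
  have hexp : ∀ s ∈ sphere (0 : ℂ) r, ‖exp (μ * s)‖ ≤ Real.exp (‖μ‖ * r) := fun s hs => by
    simpa [mem_sphere_zero_iff_norm.mp hs] using norm_exp_le_exp_norm (μ * s)
  have hsum : HasSum (fun j => ∮ s in C(0, r), a j / s ^ (j + 1) * exp (μ * s))
      (∮ s in C(0, r), (∑' j, a j / s ^ (j + 1)) * exp (μ * s)) := by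
    refine hasSum_circleIntegral_of_norm_le hr.le (fun j => ?_)
      (ha.mul_right (Real.exp (‖μ‖ * r))) (fun j s hs => ?_) (fun s hs => ?_)
    · exact (continuousOn_const.div (continuousOn_pow _) fun _ hs =>
        pow_ne_zero _ (ne_of_mem_sphere hs hr.ne')).mul (by fun_prop)
    · rw [norm_mul, norm_div_pow_of_mem_sphere _ hs]
      exact mul_le_mul_of_nonneg_left (hexp s hs) (by positivity)
    · refine (Summable.hasSum ?_).mul_right _
      exact .of_norm (ha.congr fun j => (norm_div_pow_of_mem_sphere _ hs _).symm)
  rw [← tsum_mul_left, ← hsum.tsum_eq]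
  exact tsum_congr hterm

end LaurentTail

theorem summable_norm_and_hasSum_circleIntegral_div_one_sub_exp_mul {f : ℂ → ℂ} {r : ℝ}
    (hr : 0 ≤ r) (hf : ContinuousOn f (sphere 0 r)) {w : ℂ} (hw : Real.exp r * ‖w‖ < 1) :
    (Summable fun n : ℕ => ‖w ^ n * ∮ s in C(0, r), f s * exp ((n + 1) * s)‖) ∧
      HasSum (fun n : ℕ => w ^ n * ∮ s in C(0, r), f s * exp ((n + 1) * s))
        (∮ s in C(0, r), f s * exp s / (1 - exp s * w)) := by
  obtain ⟨M, hM⟩ := (isCompact_sphere (0 : ℂ) r).exists_bound_of_continuousOn hf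
  have hexp : ∀ s ∈ sphere (0 : ℂ) r, ‖exp s‖ ≤ Real.exp r := fun s hs => by
    simpa [mem_sphere_zero_iff_norm.mp hs] using norm_exp_le_exp_norm s
  have hratio : ∀ s ∈ sphere (0 : ℂ) r, ‖exp s * w‖ ≤ Real.exp r * ‖w‖ := fun s hs => by
    rw [norm_mul]; gcongr; exact hexp s hs
  set g : ℕ → ℂ → ℂ := fun n s => f s * exp s * (exp s * w) ^ n
  have hg (n : ℕ) :
      (∮ s in C(0, r), g n s) = w ^ n * ∮ s in C(0, r), f s * exp ((n + 1) * s) := by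
    rw [← circleIntegral.integral_const_mul]
    congr 1 with s
    rw [add_mul, one_mul, Complex.exp_add, Complex.exp_nat_mul]
    ring
  have hbound (n : ℕ) :
      ∀ s ∈ sphere (0 : ℂ) r, ‖g n s‖ ≤ M * Real.exp r * (Real.exp r * ‖w‖) ^ n := by
    intro s hs
    have hM0 : 0 ≤ M := (norm_nonneg _).trans (hM s hs)
    rw [norm_mul, norm_mul, norm_pow]
    gcongr
    exacts [hM s hs, hexp s hs, hratio s hs]
  have hu := (summable_geometric_of_lt_one (by positivity) hw).mul_left (M * Real.exp r)
  simp_rw [← hg]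
  constructor
  · exact .of_nonneg_of_le (fun _ => norm_nonneg _)
      (fun n => circleIntegral.norm_integral_le_of_norm_le_const hr (hbound n))
      (hu.mul_left (2 * π * r))
  · refine hasSum_circleIntegral_of_norm_le hr (fun n => by fun_prop) hu hbound fun s hs => ?_
    rw [div_eq_mul_inv]
    exact (hasSum_geometric_of_norm_lt_one ((hratio s hs).trans_lt hw)).mul_left (f s * exp s)

theorem cpow_mul_besselI_eq_circleIntegral {k : ℤ} (hk : k ≤ 1) (m c : ℕ) {N r : ℝ}
    (hN : 0 < N) (hr : 0 < r) :
    (N : ℂ) ^ (((k : ℂ) - 1) / 2) * besselI (1 - k).toNat ((4 * π * √(m * N) / c : ℝ) : ℂ) =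
      (2 * π * I)⁻¹ * ∮ s in C(0, r), (∑' j : ℕ,
        (((2 * π * √m / c) ^ (2 * j + (1 - k).toNat) / (j + (1 - k).toNat)! : ℝ) : ℂ) /
          s ^ (j + 1)) * exp (N * s) := by
  set K := (1 - k).toNat
  set x : ℝ := 2 * π * √m / c
  have hexponent : ((k : ℂ) - 1) / 2 = -(K : ℂ) / 2 := by
    rw [← Int.cast_natCast, Int.toNat_of_nonneg (by omega)]; push_cast; ring
  have harg : 4 * π * √(m * N) / c = 2 * x * √N := by rw [Real.sqrt_mul (by positivity)]; ring
  rw [hexponent, harg, cpow_neg_half_mul_besselI K x hN,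
    circleIntegral_tsum_div_pow_succ_mul_exp hr
      (by simpa using summable_norm_pow_div_factorial_add_div_pow (x : ℂ) K hr),
    inv_mul_cancel_left₀ two_pi_I_ne_zero]

theorem Aplus_eq_contour_integral_general (k : ℤ) (hk : k < 0)
    (m c d : ℕ) (τ : ℂ)
    (r : ℝ) (hr : 0 < r)
    (hsmall : ∀ s : ℂ, ‖s‖ = r →
      ‖Complex.exp s * Complex.exp (2 * Real.pi * Complex.I / c) ^ d *
        Complex.exp (2 * Real.pi * Complex.I * τ)‖ < 1) :
    let q : ℂ := Complex.exp (2 * Real.pi * Complex.I * τ)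
    let ζ : ℂ := Complex.exp (2 * Real.pi * Complex.I / c)
    let α : ℂ → ℂ := fun s => ∑' j : ℕ,
      (((2 * Real.pi * Real.sqrt m / c) ^ (2 * j + (1 - k).toNat) /
        (Nat.factorial (j + (1 - k).toNat)) : ℝ) : ℂ) / s ^ (j + 1)
    let A : ℕ → ℂ := fun n =>
      (n : ℂ) ^ (((k : ℂ) - 1) / 2) *
        besselI (1 - k).toNat ((4 * Real.pi * Real.sqrt (m * n) / c : ℝ) : ℂ) *
        ζ ^ (n * d) * q ^ n
    (Summable fun n : ℕ => ‖A (n + 1)‖) ∧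
    (∑' n : ℕ, A (n + 1)) =
      (1 / (2 * Real.pi * Complex.I)) * (ζ ^ d * q) *
        ∮ s in C(0, r), α s * Complex.exp s / (1 - Complex.exp s * ζ ^ d * q) := by
  intro q ζ α A
  set w := ζ ^ d * q
  have hw : Real.exp r * ‖w‖ < 1 := by
    have := hsmall r (by simp [hr.le])
    rwa [mul_assoc, norm_mul, norm_exp_ofReal] at this
  have hα : ContinuousOn α (sphere 0 r) := continuousOn_tsum_div_pow_succ hr (by
    simpa using summable_norm_pow_div_factorial_add_div_pow (2 * π * √m / c) (1 - k).toNat hr)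
  obtain ⟨hsummable, hhasSum⟩ :=
    summable_norm_and_hasSum_circleIntegral_div_one_sub_exp_mul hr.le hα hw
  have hterm (n : ℕ) : A (n + 1) =
      (2 * π * I)⁻¹ * w * (w ^ n * ∮ s in C(0, r), α s * exp ((n + 1) * s)) := by
    have hbessel := cpow_mul_besselI_eq_circleIntegral (k := k) (by omega) m c
      (N := (n + 1 : ℕ)) (by positivity) hr
    simp only [ofReal_natCast] at hbessel
    simp only [A]
    rw [hbessel, mul_comm (n + 1) d, pow_mul, Nat.cast_succ]
    ring
  constructor
  · exact (hsummable.mul_left ‖(2 * π * I)⁻¹ * w‖).congr fun n => by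
      rw [hterm]
      exact (norm_mul _ _).symm
  · rw [tsum_congr hterm, tsum_mul_left, hhasSum.tsum_eq, one_div]
    simp only [w, mul_assoc]

/-- Let `k ∈ -2ℕ`, `m, c, d ≥ 1`, `τ` in the upper half-plane, `q = e^{2πiτ}`,
`ζ_c = e^{2πi/c}`. For `r > 0` with `|e^s ζ_c^d q| < 1` on `|s| = r`, the series
`A⁺_m(c,d;τ) = ∑_{n≥1} n^{(k-1)/2} I_{1-k}(4π√(mn)/c) ζ_c^{nd} q^n` converges
absolutely and equals
`(1/(2πi)) ζ_c^d q ∮_{|s|=r} α⁺_{m,c}(s) e^s / (1 - e^s ζ_c^d q) ds`, where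
`α⁺_{m,c}(s) = ∑_{j≥0} (2π√m/c)^{2j+1-k} / ((j+1-k)! s^{j+1})`. -/
theorem Aplus_eq_contour_integral (k : ℤ) (hk : k < 0) (hke : Even k)
    (m c d : ℕ) (hm : 1 ≤ m) (hc : 1 ≤ c) (hd : 1 ≤ d) (τ : ℂ) (hτ : 0 < τ.im)
    (r : ℝ) (hr : 0 < r)
    (hsmall : ∀ s : ℂ, ‖s‖ = r →
      ‖Complex.exp s * Complex.exp (2 * Real.pi * Complex.I / c) ^ d *
        Complex.exp (2 * Real.pi * Complex.I * τ)‖ < 1) :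
    let q : ℂ := Complex.exp (2 * Real.pi * Complex.I * τ)
    let ζ : ℂ := Complex.exp (2 * Real.pi * Complex.I / c)
    let α : ℂ → ℂ := fun s => ∑' j : ℕ,
      (((2 * Real.pi * Real.sqrt m / c) ^ (2 * j + (1 - k).toNat) /
        (Nat.factorial (j + (1 - k).toNat)) : ℝ) : ℂ) / s ^ (j + 1)
    let A : ℕ → ℂ := fun n =>
      (n : ℂ) ^ (((k : ℂ) - 1) / 2) *
        besselI (1 - k).toNat ((4 * Real.pi * Real.sqrt (m * n) / c : ℝ) : ℂ) *
        ζ ^ (n * d) * q ^ n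
    (Summable fun n : ℕ => ‖A (n + 1)‖) ∧
    (∑' n : ℕ, A (n + 1)) =
      (1 / (2 * Real.pi * Complex.I)) * (ζ ^ d * q) *
        ∮ s in C(0, r), α s * Complex.exp s / (1 - Complex.exp s * ζ ^ d * q) :=
  Aplus_eq_contour_integral_general k hk m c d τ r hr hsmall
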